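/- arXiv:1506.03940 — 3 statements merged into one kernel-verified Lean document; each statement's English description precedes it below -/
import Mathlib

section
/- For fixed z' ∈ 𝔹^n and an automorphism f = (f_0,…,f_n) of ℂ × 𝔹^n whose components f_1,…,f_n do not depend on z_0, the map z_0 ↦ f_0(z_0, z') is an injective entire function ℂ → ℂ, hence an affine map z_0 ↦ a z_0 + b with a ≠ 0. -/
/-!
An injective entire function `f` is an open map, so `f` stays a fixed distance away from `f 0`
outside the unit disc. Hence `w ↦ (f w⁻¹ - f 0)⁻¹` has a removable singularity at `0`, where it
vanishes to some finite order `k`. This gives `f z - f 0 = O(z ^ k)` at infinity, so `f` is a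
polynomial by Cauchy's estimates, and an injective complex polynomial has degree one.
On a slice `ℂ × {z'}` the automorphism is injective because its other components are constant there.
-/

noncomputable section

/-- The unit ball `𝔹^n = {z' ∈ ℂ^n : Σ |z'_i|² < 1}`. -/
def balln (n : ℕ) : Set (Fin n → ℂ) := {z' | ∑ i : Fin n, ‖z' i‖ ^ 2 < 1}

/-- The domain `ℂ × 𝔹^n`. -/
def CBall (n : ℕ) : Set (ℂ × (Fin n → ℂ)) := {z | z.2 ∈ balln n}

open Polynomial Filter Topology Asymptotics Bornology Metric Set Function

namespace Polynomial

variable {K : Type*} [Field K] [IsAlgClosed K]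

theorem eq_C_leadingCoeff_mul_X_sub_C_pow {q : K[X]} {a : K} (h : ∀ b, q.IsRoot b → b = a) :
    q = C q.leadingCoeff * (X - C a) ^ q.natDegree := by
  have hroots : q.roots = Multiset.replicate q.natDegree a :=
    Multiset.eq_replicate.2
      ⟨IsAlgClosed.card_roots_eq_natDegree, fun b hb => h b (isRoot_of_mem_roots hb)⟩
  conv_lhs => rw [(IsAlgClosed.splits q).eq_prod_roots, hroots, Multiset.map_replicate,
    Multiset.prod_replicate]

theorem natDegree_le_one_of_injective_eval [CharZero K] {p : K[X]} (hinj : Injective p.eval) :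
    p.natDegree ≤ 1 := by
  by_contra! hd
  have hpos : 0 < p.degree := natDegree_pos_iff_degree_pos.1 (by omega)
  -- every fibre is a single root of multiplicity `natDegree p`, and that root is then pinned down
  -- by `derivative p` alone, so the fibres over `0` and `1` would coincide
  have hfiber : ∀ w, ∃ a, p.eval a = w ∧
      derivative p = C (p.leadingCoeff * p.natDegree) * (X - C a) ^ (p.natDegree - 1) := by
    intro w
    obtain ⟨a, ha⟩ := IsAlgClosed.exists_root (p - C w) (by rw [degree_sub_C hpos]; exact hpos.ne')
    have ha : p.eval a = w := by simpa [sub_eq_zero] using ha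
    have hq := eq_C_leadingCoeff_mul_X_sub_C_pow (q := p - C w) (a := a) fun b hb =>
      hinj (by simp_all [sub_eq_zero])
    refine ⟨a, ha, ?_⟩
    have hderiv := congrArg derivative hq
    rw [derivative_sub, derivative_C, sub_zero,
      leadingCoeff_sub_of_degree_lt (degree_C_le.trans_lt hpos), natDegree_sub_C] at hderiv
    rw [hderiv, derivative_C_mul, derivative_X_sub_C_pow, C_mul, C_eq_natCast, mul_assoc]
  obtain ⟨a₀, ha₀, hd₀⟩ := hfiber 0
  obtain ⟨a₁, ha₁, hd₁⟩ := hfiber 1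
  have hd1 : p.natDegree - 1 ≠ 0 := by omega
  have hcrit := congrArg (eval a₀) (hd₀.symm.trans hd₁)
  simp only [eval_mul, eval_C, eval_pow, eval_sub, eval_X, sub_self, zero_pow hd1, mul_zero,
    zero_eq_mul, mul_eq_zero, pow_eq_zero_iff hd1, sub_eq_zero, leadingCoeff_eq_zero,
    Nat.cast_eq_zero] at hcrit
  obtain (hp | hp) | ha := hcrit
  · simp [hp] at hd
  · omega
  · exact zero_ne_one (ha₀.symm.trans (ha ▸ ha₁))

end Polynomial

theorem Differentiable.iteratedDeriv_zero_eq_zero_of_isBigO {f : ℂ → ℂ} {k n : ℕ}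
    (hf : Differentiable ℂ f) (hgrowth : f =O[cobounded ℂ] (· ^ k)) (hn : k < n) :
    iteratedDeriv n f 0 = 0 := by
  obtain ⟨C, hC⟩ := hgrowth.bound
  obtain ⟨R, -, hR⟩ := hasBasis_cobounded_norm.eventually_iff.1 hC
  have hcauchy : ∀ᶠ r in atTop, ‖iteratedDeriv n f 0‖ ≤ n.factorial * C * (r ^ k / r ^ n) := by
    filter_upwards [eventually_ge_atTop (max R 1)] with r hr
    have hr0 : 0 < r := by linarith [le_max_right R 1]
    calc _ ≤ n.factorial * (C * r ^ k) / r ^ n :=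
          Complex.norm_iteratedDeriv_le_of_forall_mem_sphere_norm_le n hr0 hf.diffContOnCl
            fun z hz => by
              have hz : ‖z‖ = r := by simpa using hz
              have hbound := @hR z (show R ≤ ‖z‖ from hz ▸ le_of_max_le_left hr)
              rwa [norm_pow, hz] at hbound
      _ = _ := by ring
  have hlim : Tendsto (fun r : ℝ => n.factorial * C * (r ^ k / r ^ n)) atTop (𝓝 0) := by
    simpa using (tendsto_pow_div_pow_atTop_zero hn).const_mul (n.factorial * C : ℝ)
  exact norm_le_zero_iff.1 (ge_of_tendsto hlim hcauchy)

theorem Differentiable.exists_polynomial_of_isBigO {f : ℂ → ℂ} {k : ℕ}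
    (hf : Differentiable ℂ f) (hgrowth : f =O[cobounded ℂ] (· ^ k)) :
    ∃ p : ℂ[X], ∀ z, f z = p.eval z := by
  refine ⟨∑ n ∈ Finset.range (k + 1), C ((n.factorial : ℂ)⁻¹ * iteratedDeriv n f 0) * X ^ n,
    fun z => ?_⟩
  rw [← Complex.taylorSeries_eq_of_entire' (c := 0) (z := z) hf,
    tsum_eq_sum (s := Finset.range (k + 1)) fun n hn => ?_]
  · simp [eval_finsetSum]
  · rw [hf.iteratedDeriv_zero_eq_zero_of_isBigO hgrowth (by simpa using hn)]
    simp

theorem AnalyticAt.isBigO_sub_pow_analyticOrderNatAt {𝕜 : Type*} [NontriviallyNormedField 𝕜]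
    {h : 𝕜 → 𝕜} {z₀ : 𝕜} (hh : AnalyticAt 𝕜 h z₀) (hfin : analyticOrderAt h z₀ ≠ ⊤) :
    (fun z => (z - z₀) ^ analyticOrderNatAt h z₀) =O[𝓝 z₀] h := by
  obtain ⟨g, hg, hg0, hfac⟩ :=
    hh.analyticOrderAt_eq_natCast.1 (Nat.cast_analyticOrderNatAt hfin).symm
  have hdiv : (fun z => (z - z₀) ^ analyticOrderNatAt h z₀) =ᶠ[𝓝 z₀] fun z => (g z)⁻¹ * h z := by
    filter_upwards [hfac, hg.continuousAt.eventually_ne hg0] with z hz hgz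
    rw [hz, smul_eq_mul, mul_comm, mul_inv_cancel_right₀ hgz]
  refine hdiv.trans_isBigO ?_
  simpa using ((hg.continuousAt.inv₀ hg0).isBigO_one 𝕜).mul (isBigO_refl h _)

def reciprocalAtInfinity (f : ℂ → ℂ) (w : ℂ) : ℂ := (f w⁻¹ - f 0)⁻¹

namespace Function.Injective

variable {f : ℂ → ℂ} (hinj : Injective f) (hf : Differentiable ℂ f)
include hinj hf

theorem exists_pos_le_norm_sub_apply_zero : ∃ ε > 0, ∀ z, 1 ≤ ‖z‖ → ε ≤ ‖f z - f 0‖ := by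
  have hopen : IsOpenMap f := by
    refine (Complex.analyticOnNhd_univ_iff_differentiable.2 hf).is_constant_or_isOpenMap
      |>.resolve_left ?_
    rintro ⟨w, hw⟩
    exact zero_ne_one (hinj ((hw 0).trans (hw 1).symm))
  obtain ⟨ε, hε, hball⟩ := Metric.isOpen_iff.1 (hopen _ isOpen_ball) (f 0)
    (mem_image_of_mem f (mem_ball_self one_pos))
  refine ⟨ε, hε, fun z hz => not_lt.1 fun hlt => ?_⟩
  obtain ⟨w, hw, hwz⟩ := hball (mem_ball_iff_norm.2 hlt)
  rw [hinj hwz, mem_ball_zero_iff] at hw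
  exact hz.not_gt hw

theorem exists_analyticAt_eventuallyEq_reciprocalAtInfinity :
    ∃ h : ℂ → ℂ, AnalyticAt ℂ h 0 ∧ h =ᶠ[𝓝[≠] 0] reciprocalAtInfinity f := by
  obtain ⟨ε, hε, hfar⟩ := hinj.exists_pos_le_norm_sub_apply_zero hf
  have hdiff : DifferentiableOn ℂ (reciprocalAtInfinity f) (ball 0 1 \ {0}) := by
    rintro w ⟨-, hw⟩
    have hw : w ≠ 0 := hw
    exact (((hf _).comp w (differentiableAt_inv hw)).sub_const _).inv
      (sub_ne_zero.2 (hinj.ne (inv_ne_zero hw))) |>.differentiableWithinAt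
  have hbdd : BddAbove (norm ∘ reciprocalAtInfinity f '' (ball 0 1 \ {0})) := by
    refine ⟨ε⁻¹, ?_⟩
    rintro _ ⟨w, ⟨hw1, hw0⟩, rfl⟩
    have hw0 : w ≠ 0 := hw0
    have hfar_w : 1 ≤ ‖w⁻¹‖ := by
      rw [norm_inv]
      exact (one_le_inv₀ (norm_pos_iff.2 hw0)).2 (mem_ball_zero_iff.1 hw1).le
    simpa [reciprocalAtInfinity] using inv_anti₀ hε (hfar _ hfar_w)
  have hball := ball_mem_nhds (0 : ℂ) one_pos
  refine ⟨_, (Complex.differentiableOn_update_limUnder_of_bddAbove hball hdiff hbdd).analyticAt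
    hball, ?_⟩
  filter_upwards [self_mem_nhdsWithin] with w hw using update_of_ne hw _ _

theorem exists_isBigO_pow_reciprocalAtInfinity :
    ∃ k : ℕ, (fun w : ℂ => w ^ k) =O[𝓝[≠] 0] reciprocalAtInfinity f := by
  obtain ⟨h, hh, heq⟩ := hinj.exists_analyticAt_eventuallyEq_reciprocalAtInfinity hf
  have hfin : analyticOrderAt h 0 ≠ ⊤ := by
    rw [Ne, analyticOrderAt_eq_top]
    intro hzero
    obtain ⟨w, hw0, hweq, hw⟩ :=
      ((hzero.filter_mono nhdsWithin_le_nhds).and (heq.and self_mem_nhdsWithin)).exists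
    exact inv_ne_zero (sub_ne_zero.2 (hinj.ne (inv_ne_zero hw))) (hweq.symm.trans hw0)
  refine ⟨analyticOrderNatAt h 0, ?_⟩
  simpa using
    ((hh.isBigO_sub_pow_analyticOrderNatAt hfin).mono nhdsWithin_le_nhds).trans_eventuallyEq heq

theorem exists_isBigO_sub_apply_zero_pow :
    ∃ k : ℕ, (fun z => f z - f 0) =O[cobounded ℂ] (· ^ k) := by
  obtain ⟨k, hk⟩ := hinj.exists_isBigO_pow_reciprocalAtInfinity hf
  refine ⟨k, ?_⟩
  have hinv := (hk.comp_tendsto tendsto_inv₀_cobounded').inv_rev ?_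
  · simpa [reciprocalAtInfinity, Function.comp_def] using hinv
  · filter_upwards [eventually_ne_cobounded 0] with z hz hzero
    exact absurd (pow_eq_zero_iff'.1 hzero).1 (inv_ne_zero hz)

theorem exists_eq_mul_add : ∃ a b : ℂ, a ≠ 0 ∧ ∀ z, f z = a * z + b := by
  obtain ⟨k, hk⟩ := hinj.exists_isBigO_sub_apply_zero_pow hf
  obtain ⟨p, hp⟩ := (hf.sub_const (f 0)).exists_polynomial_of_isBigO hk
  have hpinj : Injective p.eval := fun x y hxy =>
    hinj (sub_left_injective ((hp x).trans (hxy.trans (hp y).symm)))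
  have hlin := eq_X_add_C_of_natDegree_le_one (natDegree_le_one_of_injective_eval hpinj)
  have hf_eq : ∀ z, f z = p.coeff 1 * z + (p.coeff 0 + f 0) := fun z => by
    have hz := hp z
    rw [hlin] at hz
    simp only [eval_add, eval_mul, eval_C, eval_X] at hz
    linear_combination hz
  refine ⟨p.coeff 1, p.coeff 0 + f 0, fun h1 => ?_, hf_eq⟩
  exact zero_ne_one (hinj (by rw [hf_eq 0, hf_eq 1, h1]; ring))

end Function.Injective

theorem Set.InjOn.injective_fst_comp_prodMk {α β γ δ : Type*} {f : α × β → γ × δ}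
    {s : Set (α × β)} (hf : InjOn f s) {b : β} (hs : ∀ a, (a, b) ∈ s)
    (hsnd : ∀ a a', (f (a, b)).2 = (f (a', b)).2) : Injective fun a => (f (a, b)).1 :=
  fun a a' h => congrArg Prod.fst (hf (hs a) (hs a') (Prod.ext h (hsnd a a')))

theorem DifferentiableOn.differentiable_fst_comp_prodMk {𝕜 E F G H : Type*}
    [NontriviallyNormedField 𝕜] [NormedAddCommGroup E] [NormedSpace 𝕜 E] [NormedAddCommGroup F]
    [NormedSpace 𝕜 F] [NormedAddCommGroup G] [NormedSpace 𝕜 G] [NormedAddCommGroup H]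
    [NormedSpace 𝕜 H] {f : E × F → G × H} {s : Set (E × F)} (hf : DifferentiableOn 𝕜 f s)
    (hs : IsOpen s) {b : F} (hsb : ∀ a, (a, b) ∈ s) :
    Differentiable 𝕜 fun a => (f (a, b)).1 := fun a =>
  ((hf.differentiableAt (hs.mem_nhds (hsb a))).comp a
    (differentiableAt_id.prodMk (differentiableAt_const b))).fst

theorem isOpen_CBall (n : ℕ) : IsOpen (CBall n) :=
  (isOpen_lt (by fun_prop) continuous_const : IsOpen (balln n)).preimage continuous_snd

theorem aut_CBall_first_component_affine_general (n : ℕ)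
    (f g : ℂ × (Fin n → ℂ) → ℂ × (Fin n → ℂ))
    (hinv : Set.InvOn g f (CBall n) (CBall n))
    (hf : DifferentiableOn ℂ f (CBall n))
    (hindep : ∀ z' ∈ balln n, ∀ w w' : ℂ, (f (w, z')).2 = (f (w', z')).2)
    (z' : Fin n → ℂ) (hz' : z' ∈ balln n) :
    Function.Injective (fun w : ℂ => (f (w, z')).1) ∧
    ∃ a b : ℂ, a ≠ 0 ∧ ∀ w : ℂ, (f (w, z')).1 = a * w + b := by
  have hslice : ∀ w : ℂ, (w, z') ∈ CBall n := fun _ => hz'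
  have hinj := hinv.1.injOn.injective_fst_comp_prodMk hslice (hindep z' hz')
  exact ⟨hinj, hinj.exists_eq_mul_add (hf.differentiable_fst_comp_prodMk (isOpen_CBall n) hslice)⟩

/-- For fixed `z' ∈ 𝔹^n` and an automorphism `f = (f_0,…,f_n)` of
`ℂ × 𝔹^n` whose components `f_1, …, f_n` do not depend on `z_0`, the map
`z_0 ↦ f_0(z_0, z')` is an injective entire function `ℂ → ℂ`, hence an affine map
`z_0 ↦ a z_0 + b` with `a ≠ 0`. -/
theorem aut_CBall_first_component_affine (n : ℕ)
    (f g : ℂ × (Fin n → ℂ) → ℂ × (Fin n → ℂ))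
    (hfm : Set.MapsTo f (CBall n) (CBall n)) (hgm : Set.MapsTo g (CBall n) (CBall n))
    (hinv : Set.InvOn g f (CBall n) (CBall n))
    (hf : DifferentiableOn ℂ f (CBall n)) (hg : DifferentiableOn ℂ g (CBall n))
    (hindep : ∀ z' ∈ balln n, ∀ w w' : ℂ, (f (w, z')).2 = (f (w', z')).2)
    (z' : Fin n → ℂ) (hz' : z' ∈ balln n) :
    Function.Injective (fun w : ℂ => (f (w, z')).1) ∧
    ∃ a b : ℂ, a ≠ 0 ∧ ∀ w : ℂ, (f (w, z')).1 = a * w + b :=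
  aut_CBall_first_component_affine_general n f g hinv hf hindep z' hz'

end
end

section
/- Every holomorphic function on D^{p,q} (with p > 1, q > 0) extends to a holomorphic function on ℂ^{p+q}. -/
/-!
Fix the coordinate `k = q`, the first one entering the form with a plus sign. For every
`z ∈ ℂ^{p+q}` the slice `{ζ | update z k ζ ∈ D^{p,q}}` is the complement of a closed disc, so
the Cauchy integral of `ζ ↦ f (update z k ζ) / (ζ - z k)` over a large circle does not depend
on the radius; it defines `F`, which is holomorphic in all variables by differentiation under the
integral sign (the derivatives are controlled by Cauchy estimates). Where the slice is all of `ℂ`,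
Cauchy's formula gives `F = f`. For `z ∈ D^{p,q}` move a second such coordinate `j`: the function
`u ↦ (F - f) (update z j u)` is holomorphic on the `j`-th slice of `D^{p,q}`, again the complement
of a closed disc and hence connected, and vanishes for large `|u|`, so it vanishes at `u = z j` by
the identity theorem.
-/

noncomputable section

/-- The domain `D^{p,q} = {z ∈ ℂ^{p+q} : -|z_1|² - ⋯ - |z_q|² + |z_{q+1}|² + ⋯ + |z_{p+q}|² > 0}`
(the first `q` coordinates enter with a minus sign). -/
def Dpq (p q : ℕ) : Set (Fin (p+q) → ℂ) :=
  {z | 0 < ∑ i : Fin (p+q), (if (i : ℕ) < q then (-1 : ℝ) else 1) * ‖z i‖ ^ 2}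

open Complex Real Metric Set Function MeasureTheory Filter Topology

theorem ContinuousLinearMap.eq_sum_proj_smulRight {𝕜 ι F : Type*} [NormedField 𝕜] [Fintype ι]
    [DecidableEq ι] [NormedAddCommGroup F] [NormedSpace 𝕜 F] (L : (ι → 𝕜) →L[𝕜] F) :
    L = ∑ i, (ContinuousLinearMap.proj i : (ι → 𝕜) →L[𝕜] 𝕜).smulRight (L (Pi.single i 1)) := by
  ext x
  simp only [sum_apply, ContinuousLinearMap.smulRight_apply, ContinuousLinearMap.proj_apply]
  conv_lhs => rw [← Finset.univ_sum_single x]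
  simp_rw [map_sum, ← map_smul, ← Pi.single_smul', smul_eq_mul, mul_one]

section ParametricIntegral

variable {α ι E F : Type*} [MeasurableSpace α] {μ : Measure α} [Fintype ι]
  [NormedAddCommGroup E] [NormedSpace ℂ E] [NormedAddCommGroup F] [NormedSpace ℂ F]

theorem norm_fderiv_le_of_forall_mem_ball_norm_le {f : E → F} {c : E} {r M : ℝ} (hr : 0 < r)
    (hd : DifferentiableOn ℂ f (ball c r)) (hM : ∀ z ∈ ball c r, ‖f z‖ ≤ M) :
    ‖fderiv ℂ f c‖ ≤ 2 * M / r := by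
  refine Complex.norm_fderiv_le_div_of_mapsTo_ball hd (fun z hz => ?_) hr
  rw [mem_closedBall, dist_eq_norm]
  calc ‖f z - f c‖ ≤ ‖f z‖ + ‖f c‖ := norm_sub_le _ _
    _ ≤ 2 * M := by linarith [hM z hz, hM c (mem_ball_self hr)]

theorem aestronglyMeasurable_fderiv_of_forall_mem_ball {ψ : (ι → ℂ) → α → F} {x₀ : ι → ℂ}
    {r : ℝ} (hr : 0 < r) (hmeas : ∀ x ∈ ball x₀ r, AEStronglyMeasurable (ψ x) μ)
    (hdiff : ∀ᵐ a ∂μ, DifferentiableAt ℂ (ψ · a) x₀) :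
    AEStronglyMeasurable (fun a => fderiv ℂ (ψ · a) x₀) μ := by
  classical
  -- a directional derivative is an a.e. limit of `n • (ψ (x₀ + n⁻¹ • v) - ψ x₀)`
  have hdir : ∀ v : ι → ℂ, AEStronglyMeasurable (fun a => fderiv ℂ (ψ · a) x₀ v) μ := by
    intro v
    obtain ⟨N, hN⟩ := exists_nat_gt (‖v‖ / r)
    have hc : Tendsto (fun n : ℕ => ‖((n + N : ℕ) : ℂ)‖) atTop atTop := by
      simp only [Complex.norm_natCast]
      exact tendsto_natCast_atTop_atTop.comp (tendsto_add_atTop_nat N)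
    refine aestronglyMeasurable_of_tendsto_ae atTop (fun n => ?_)
      (hdiff.mono fun a ha => ha.hasFDerivAt.lim v hc)
    refine ((hmeas _ ?_).sub (hmeas x₀ (mem_ball_self hr))).const_smul _
    rw [div_lt_iff₀ hr] at hN
    have hpos : (0 : ℝ) < n + N := by
      nlinarith [norm_nonneg v, (Nat.cast_nonneg n : (0 : ℝ) ≤ n)]
    rw [mem_ball, dist_self_add_left, norm_smul, norm_inv, Complex.norm_natCast, Nat.cast_add,
      inv_mul_eq_div, div_lt_iff₀ hpos]
    nlinarith [(Nat.cast_nonneg n : (0 : ℝ) ≤ n)]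
  rw [funext fun a => (fderiv ℂ (ψ · a) x₀).eq_sum_proj_smulRight]
  refine Finset.aestronglyMeasurable_fun_sum _ fun i _ => ?_
  exact (ContinuousLinearMap.smulRightL ℂ (ι → ℂ) F (.proj i)).continuous.comp_aestronglyMeasurable
    (hdir _)

theorem differentiableAt_integral_of_forall_mem_ball [IsFiniteMeasure μ] [CompleteSpace F]
    {ψ : (ι → ℂ) → α → F} {x₀ : ι → ℂ} {r M : ℝ} (hr : 0 < r)
    (hmeas : ∀ x ∈ ball x₀ r, AEStronglyMeasurable (ψ x) μ)
    (hdiff : ∀ a, DifferentiableOn ℂ (ψ · a) (ball x₀ r))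
    (hbound : ∀ x ∈ ball x₀ r, ∀ a, ‖ψ x a‖ ≤ M) :
    DifferentiableAt ℂ (fun x => ∫ a, ψ x a ∂μ) x₀ := by
  have hdiffAt : ∀ a, ∀ x ∈ ball x₀ r, DifferentiableAt ℂ (ψ · a) x :=
    fun a x hx => (hdiff a).differentiableAt (isOpen_ball.mem_nhds hx)
  have hfderiv : ∀ a, ∀ x ∈ ball x₀ (r / 2), ‖fderiv ℂ (ψ · a) x‖ ≤ 2 * M / (r / 2) := by
    intro a x hx
    have hsub : ball x (r / 2) ⊆ ball x₀ r := ball_subset_ball' (by linarith [mem_ball.1 hx])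
    exact norm_fderiv_le_of_forall_mem_ball_norm_le (half_pos hr) ((hdiff a).mono hsub)
      fun z hz => hbound z (hsub hz) a
  refine (hasFDerivAt_integral_of_dominated_of_fderiv_le (ball_mem_nhds x₀ (half_pos hr))
    (eventually_of_mem (ball_mem_nhds x₀ hr) hmeas)
    (.of_bound (hmeas x₀ (mem_ball_self hr)) M (.of_forall (hbound x₀ (mem_ball_self hr))))
    (aestronglyMeasurable_fderiv_of_forall_mem_ball hr hmeas
      (.of_forall fun a => hdiffAt a x₀ (mem_ball_self hr)))
    (.of_forall hfderiv) (integrable_const _) (.of_forall fun a x hx => ?_)).differentiableAt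
  exact (hdiffAt a x (ball_subset_ball (by linarith) hx)).hasFDerivAt

theorem differentiableAt_circleIntegral_of_continuousOn [CompleteSpace F]
    {Φ : (ι → ℂ) → ℂ → F} {x₀ : ι → ℂ} {c : ℂ} {r R : ℝ} (hr : 0 < r) (hR : 0 ≤ R)
    (hcont : ContinuousOn (uncurry Φ) (closedBall x₀ r ×ˢ sphere c R))
    (hdiff : ∀ ζ ∈ sphere c R, DifferentiableOn ℂ (Φ · ζ) (ball x₀ r)) :
    DifferentiableAt ℂ (fun x => ∮ ζ in C(c, R), Φ x ζ) x₀ := by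
  obtain ⟨M, hM⟩ :=
    ((isCompact_closedBall x₀ r).prod (isCompact_sphere c R)).exists_bound_of_continuousOn hcont
  have hcirc := circleMap_mem_sphere c hR
  have hmeas : ∀ x ∈ ball x₀ r,
      Continuous fun θ => deriv (circleMap c R) θ • Φ x (circleMap c R θ) := by
    intro x hx
    simp only [deriv_circleMap]
    refine ((continuous_circleMap 0 R).mul continuous_const).smul ?_
    refine hcont.comp_continuous (continuous_const.prodMk (continuous_circleMap c R)) fun θ => ?_
    exact ⟨ball_subset_closedBall hx, hcirc θ⟩
  simp only [circleIntegral, intervalIntegral.integral_of_le Real.two_pi_pos.le]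
  refine differentiableAt_integral_of_forall_mem_ball hr (M := R * M)
    (fun x hx => (hmeas x hx).aestronglyMeasurable)
    (fun θ => ((hdiff _ (hcirc θ)).const_smul _)) fun x hx θ => ?_
  rw [norm_smul, deriv_circleMap, norm_mul, norm_circleMap_zero, norm_I, mul_one, abs_of_nonneg hR]
  exact mul_le_mul_of_nonneg_left (hM (x, _) ⟨ball_subset_closedBall hx, hcirc θ⟩) hR

end ParametricIntegral

theorem differentiable_update_const {𝕜 ι : Type*} [NontriviallyNormedField 𝕜] [Fintype ι]
    [DecidableEq ι] {E : ι → Type*} [∀ i, NormedAddCommGroup (E i)] [∀ i, NormedSpace 𝕜 (E i)]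
    (k : ι) (y : E k) : Differentiable 𝕜 fun x : (i : ι) → E i => update x k y := by
  refine differentiable_pi.2 fun i => ?_
  rcases eq_or_ne i k with rfl | hi
  · simp
  · simpa [update_of_ne hi] using differentiable_apply i

theorem isConnected_setOf_lt_norm {E : Type*} [NormedAddCommGroup E] [NormedSpace ℝ E]
    (hE : 1 < Module.rank ℝ E) {r : ℝ} (hr : 0 ≤ r) : IsConnected {u : E | r < ‖u‖} := by
  have himage : {u : E | r < ‖u‖} = (fun p : ℝ × E => p.1 • p.2) '' (Ioi r ×ˢ sphere 0 1) := by
    ext u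
    constructor
    · intro hu
      have hu0 : u ≠ 0 := norm_pos_iff.1 (hr.trans_lt hu)
      refine ⟨(‖u‖, ‖u‖⁻¹ • u), ⟨hu, ?_⟩, ?_⟩
      · simp [norm_smul, hu0]
      · simp [smul_smul, hu0]
    · rintro ⟨⟨t, v⟩, ⟨ht, hv⟩, rfl⟩
      simp only [mem_Ioi, mem_sphere_zero_iff_norm] at ht hv
      simp [norm_smul, hv, abs_of_pos (hr.trans_lt ht), ht]
  rw [himage]
  exact (isConnected_Ioi.prod (isPathConnected_sphere hE 0 zero_le_one).isConnected).image _
    (continuous_fst.smul continuous_snd).continuousOn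

theorem isPreconnected_setOf_lt_norm_sq {E : Type*} [NormedAddCommGroup E] [NormedSpace ℝ E]
    (hE : 1 < Module.rank ℝ E) (c : ℝ) : IsPreconnected {u : E | c < ‖u‖ ^ 2} := by
  rcases lt_or_ge c 0 with hc | hc
  · rw [eq_univ_of_forall (s := {u : E | c < ‖u‖ ^ 2}) fun u => hc.trans_le (sq_nonneg ‖u‖)]
    exact convex_univ.isPreconnected
  · convert (isConnected_setOf_lt_norm hE (Real.sqrt_nonneg c)).isPreconnected using 1
    ext u
    exact (Real.sqrt_lt hc (norm_nonneg u)).symm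

theorem circleIntegral_sub_inv_smul_eq_of_le {E : Type*} [NormedAddCommGroup E] [NormedSpace ℂ E]
    {g : ℂ → E} {w : ℂ} {R₁ R₂ : ℝ} (hw : ‖w‖ < R₁) (hR : R₁ ≤ R₂)
    (hg : ∀ ζ, R₁ ≤ ‖ζ‖ → DifferentiableAt ℂ g ζ) :
    (∮ ζ in C(0, R₂), (ζ - w)⁻¹ • g ζ) = ∮ ζ in C(0, R₁), (ζ - w)⁻¹ • g ζ := by
  have hdiff : ∀ ζ, R₁ ≤ ‖ζ‖ → DifferentiableAt ℂ (fun ζ => (ζ - w)⁻¹ • g ζ) ζ := by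
    intro ζ hζ
    have hne : ζ - w ≠ 0 := sub_ne_zero.2 (ne_of_apply_ne norm (by linarith))
    exact ((differentiableAt_fun_id.sub_const w).inv hne).smul (hg ζ hζ)
  refine circleIntegral_eq_of_differentiable_on_annulus_off_countable ((norm_nonneg w).trans_lt hw)
    hR countable_empty (fun ζ hζ => (hdiff ζ ?_).continuousAt.continuousWithinAt)
    fun ζ hζ => hdiff ζ ?_
  · simpa using hζ.2
  · exact (by simpa using hζ.1.2 : R₁ < ‖ζ‖).le

section SliceCauchyIntegral

variable {ι F : Type*} [Fintype ι] [DecidableEq ι] [NormedAddCommGroup F] [NormedSpace ℂ F]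
  {f : (ι → ℂ) → F} {U : Set (ι → ℂ)} {k : ι}

theorem DifferentiableOn.differentiableAt_comp_update (hf : DifferentiableOn ℂ f U)
    (hU : IsOpen U) {z : ι → ℂ} {ζ : ℂ} (h : update z k ζ ∈ U) :
    DifferentiableAt ℂ (fun u => f (update z k u)) ζ :=
  (hf.differentiableAt (hU.mem_nhds h)).comp ζ (hasDerivAt_update z k ζ).differentiableAt

def sliceCauchyIntegral (f : (ι → ℂ) → F) (k : ι) (R : ℝ) (z : ι → ℂ) : F :=
  (2 * π * I : ℂ)⁻¹ • ∮ ζ in C(0, R), (ζ - z k)⁻¹ • f (update z k ζ)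

theorem differentiableAt_sliceCauchyIntegral [CompleteSpace F] (hU : IsOpen U)
    (hf : DifferentiableOn ℂ f U) {R : ℝ} {z₀ : ι → ℂ} (hz₀ : ‖z₀ k‖ < R)
    (hsphere : ∀ ζ ∈ sphere (0 : ℂ) R, update z₀ k ζ ∈ U) :
    DifferentiableAt ℂ (sliceCauchyIntegral f k R) z₀ := by
  have hopen : IsOpen {p : (ι → ℂ) × ℂ | update p.1 k p.2 ∈ U ∧ p.2 ≠ p.1 k} :=
    (hU.preimage (by fun_prop)).inter (isOpen_ne_fun continuous_snd (by fun_prop))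
  have hev : ∀ᶠ z in 𝓝 z₀, ∀ ζ ∈ sphere (0 : ℂ) R, update z k ζ ∈ U ∧ ζ ≠ z k := by
    refine (isCompact_sphere 0 R).eventually_forall_of_forall_eventually fun ζ hζ => ?_
    have hne : ‖ζ‖ ≠ ‖z₀ k‖ := (hz₀.trans_eq (mem_sphere_zero_iff_norm.1 hζ).symm).ne'
    exact hopen.mem_nhds ⟨hsphere ζ hζ, ne_of_apply_ne norm hne⟩
  obtain ⟨r, hr, hball⟩ := nhds_basis_closedBall.eventually_iff.1 hev
  refine (differentiableAt_circleIntegral_of_continuousOn hr ((norm_nonneg _).trans hz₀.le)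
    ?_ fun ζ hζ z hz => ?_).const_smul _
  · intro p hp
    obtain ⟨hU', hne⟩ := hball hp.1 p.2 hp.2
    refine ContinuousAt.continuousWithinAt ?_
    refine ((by fun_prop : Continuous fun p : (ι → ℂ) × ℂ => p.2 - p.1 k).continuousAt.inv₀
      (sub_ne_zero.2 hne)).smul ?_
    exact ContinuousAt.comp (f := fun p : (ι → ℂ) × ℂ => update p.1 k p.2)
      (hf.continuousOn.continuousAt (hU.mem_nhds hU')) (by fun_prop)
  · obtain ⟨hU', hne⟩ := hball (ball_subset_closedBall hz) ζ hζ
    refine DifferentiableAt.differentiableWithinAt ?_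
    exact (((by fun_prop : Differentiable ℂ fun z : ι → ℂ => ζ - z k) z).inv
      (sub_ne_zero.2 hne)).smul
      ((hf.differentiableAt (hU.mem_nhds hU')).comp z (differentiable_update_const k ζ z))

theorem sliceCauchyIntegral_eq_of_le (hU : IsOpen U) (hf : DifferentiableOn ℂ f U)
    {R₁ R₂ : ℝ} {z : ι → ℂ} (hz : ‖z k‖ < R₁) (hR : R₁ ≤ R₂)
    (hslice : ∀ ζ : ℂ, R₁ ≤ ‖ζ‖ → update z k ζ ∈ U) :
    sliceCauchyIntegral f k R₂ z = sliceCauchyIntegral f k R₁ z := by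
  rw [sliceCauchyIntegral, sliceCauchyIntegral, circleIntegral_sub_inv_smul_eq_of_le hz hR
    fun ζ hζ => hf.differentiableAt_comp_update hU (hslice ζ hζ)]

theorem sliceCauchyIntegral_eq_self [CompleteSpace F] (hU : IsOpen U)
    (hf : DifferentiableOn ℂ f U) {R : ℝ} {z : ι → ℂ} (hz : ‖z k‖ < R)
    (hslice : ∀ ζ : ℂ, ‖ζ‖ ≤ R → update z k ζ ∈ U) :
    sliceCauchyIntegral f k R z = f z := by
  have hd : ∀ ζ ∈ closedBall (0 : ℂ) R, DifferentiableAt ℂ (fun u => f (update z k u)) ζ :=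
    fun ζ hζ => hf.differentiableAt_comp_update hU (hslice ζ (mem_closedBall_zero_iff.1 hζ))
  simpa only [sliceCauchyIntegral, update_eq_self] using
    two_pi_I_inv_smul_circleIntegral_sub_inv_smul_of_differentiable_on_off_countable
    countable_empty (mem_ball_zero_iff.2 hz) (fun ζ hζ => (hd ζ hζ).continuousAt.continuousWithinAt)
    fun ζ hζ => hd ζ (ball_subset_closedBall hζ.1)

end SliceCauchyIntegral

section Dpq

variable {p q n : ℕ} {F : Type*} [NormedAddCommGroup F] [NormedSpace ℂ F]

def signedNormSq (q : ℕ) {n : ℕ} (z : Fin n → ℂ) : ℝ :=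
  ∑ i : Fin n, (if (i : ℕ) < q then (-1 : ℝ) else 1) * ‖z i‖ ^ 2

theorem continuous_signedNormSq : Continuous (signedNormSq q (n := n)) := by
  unfold signedNormSq
  fun_prop

theorem mem_Dpq {z : Fin (p + q) → ℂ} : z ∈ Dpq p q ↔ 0 < signedNormSq q z :=
  Iff.rfl

theorem isOpen_Dpq : IsOpen (Dpq p q) :=
  isOpen_lt continuous_const continuous_signedNormSq

theorem signedNormSq_update_of_le (z : Fin n → ℂ) {k : Fin n} (hk : q ≤ k) (ζ : ℂ) :
    signedNormSq q (update z k ζ) = signedNormSq q z - ‖z k‖ ^ 2 + ‖ζ‖ ^ 2 := by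
  have hdiff : signedNormSq q (update z k ζ) - signedNormSq q z = ‖ζ‖ ^ 2 - ‖z k‖ ^ 2 := by
    rw [signedNormSq, signedNormSq, ← Finset.sum_sub_distrib,
      Finset.sum_eq_single k (fun i _ hi => by simp [update_of_ne hi]) (by simp)]
    simp [hk.not_gt]
  linarith

theorem update_mem_Dpq_iff (z : Fin (p + q) → ℂ) {k : Fin (p + q)} (hk : q ≤ k) (ζ : ℂ) :
    update z k ζ ∈ Dpq p q ↔ ‖z k‖ ^ 2 - signedNormSq q z < ‖ζ‖ ^ 2 := by
  rw [mem_Dpq, signedNormSq_update_of_le z hk]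
  constructor <;> intro h <;> linarith

theorem lt_abs_add_one_sq (a : ℝ) : a < (|a| + 1) ^ 2 := by
  nlinarith [le_abs_self a, abs_nonneg a]

/-- A radius exceeding `‖z k‖` beyond which the `k`-th slice through `z` lies in `D^{p,q}`. -/
def sliceRadius (q : ℕ) {n : ℕ} (k : Fin n) (z : Fin n → ℂ) : ℝ :=
  ‖z k‖ + |‖z k‖ ^ 2 - signedNormSq q z| + 1

theorem continuous_sliceRadius (k : Fin n) : Continuous (sliceRadius q k) := by
  unfold sliceRadius
  have := continuous_signedNormSq (q := q) (n := n)
  fun_prop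

theorem norm_lt_sliceRadius (k : Fin n) (z : Fin n → ℂ) : ‖z k‖ < sliceRadius q k z := by
  unfold sliceRadius
  linarith [abs_nonneg (‖z k‖ ^ 2 - signedNormSq q z)]

theorem update_mem_Dpq_of_sliceRadius_le {z : Fin (p + q) → ℂ} {k : Fin (p + q)} (hk : q ≤ k)
    {ζ : ℂ} (hζ : sliceRadius q k z ≤ ‖ζ‖) : update z k ζ ∈ Dpq p q := by
  rw [update_mem_Dpq_iff z hk]
  set c := ‖z k‖ ^ 2 - signedNormSq q z
  have hc : |c| + 1 ≤ ‖ζ‖ := by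
    unfold sliceRadius at hζ
    linarith [norm_nonneg (z k)]
  calc c < (|c| + 1) ^ 2 := lt_abs_add_one_sq c
    _ ≤ ‖ζ‖ ^ 2 := by gcongr

def hartogsExtension (q : ℕ) {n : ℕ} (f : (Fin n → ℂ) → F) (k : Fin n) (z : Fin n → ℂ) : F :=
  sliceCauchyIntegral f k (sliceRadius q k z) z

theorem differentiable_hartogsExtension [CompleteSpace F] {f : (Fin (p + q) → ℂ) → F}
    {k : Fin (p + q)} (hk : q ≤ k) (hf : DifferentiableOn ℂ f (Dpq p q)) :
    Differentiable ℂ (hartogsExtension q f k) := by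
  intro z₀
  set R := sliceRadius q k z₀ + 1
  have hnear : ∀ᶠ z in 𝓝 z₀, sliceRadius q k z < R :=
    (continuous_sliceRadius k).continuousAt.eventually_lt continuousAt_const (lt_add_one _)
  have heq : hartogsExtension q f k =ᶠ[𝓝 z₀] sliceCauchyIntegral f k R :=
    hnear.mono fun z hz => (sliceCauchyIntegral_eq_of_le isOpen_Dpq hf (norm_lt_sliceRadius k z)
      hz.le fun ζ hζ => update_mem_Dpq_of_sliceRadius_le hk hζ).symm
  refine (differentiableAt_sliceCauchyIntegral isOpen_Dpq hf
    ((norm_lt_sliceRadius k z₀).trans (lt_add_one _)) fun ζ hζ =>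
      update_mem_Dpq_of_sliceRadius_le hk ?_).congr_of_eventuallyEq heq
  rw [mem_sphere_zero_iff_norm.1 hζ]
  exact (lt_add_one _).le

theorem hartogsExtension_eq_self [CompleteSpace F] {f : (Fin (p + q) → ℂ) → F}
    {k : Fin (p + q)} (hk : q ≤ k) (hf : DifferentiableOn ℂ f (Dpq p q)) {z : Fin (p + q) → ℂ}
    (hz : ‖z k‖ ^ 2 < signedNormSq q z) : hartogsExtension q f k z = f z :=
  sliceCauchyIntegral_eq_self isOpen_Dpq hf (norm_lt_sliceRadius k z) fun ζ _ =>
    (update_mem_Dpq_iff z hk ζ).2 (by nlinarith [sq_nonneg ‖ζ‖])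

theorem eqOn_Dpq_of_eq_of_norm_sq_lt [CompleteSpace F] {g f : (Fin (p + q) → ℂ) → F}
    (hg : Differentiable ℂ g) (hf : DifferentiableOn ℂ f (Dpq p q)) {j k : Fin (p + q)}
    (hj : q ≤ j) (hjk : j ≠ k) (heq : ∀ z, ‖z k‖ ^ 2 < signedNormSq q z → g z = f z) :
    EqOn g f (Dpq p q) := by
  intro z hz
  set c := ‖z j‖ ^ 2 - signedNormSq q z
  set Ω := {u : ℂ | c < ‖u‖ ^ 2}
  have hΩ : IsOpen Ω := isOpen_lt continuous_const (by fun_prop)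
  have hdg : DifferentiableOn ℂ (fun u => g (update z j u)) Ω := fun u _ =>
    ((hg _).comp u (hasDerivAt_update z j u).differentiableAt).differentiableWithinAt
  have hdf : DifferentiableOn ℂ (fun u => f (update z j u)) Ω := fun u hu =>
    (hf.differentiableAt_comp_update isOpen_Dpq
      ((update_mem_Dpq_iff z hj u).2 hu)).differentiableWithinAt
  set a := c + ‖z k‖ ^ 2
  have hfar : EqOn (fun u => g (update z j u)) (fun u => f (update z j u)) {u | a < ‖u‖ ^ 2} := by
    intro u hu
    refine heq _ ?_
    rw [update_of_ne hjk.symm, signedNormSq_update_of_le z hj]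
    linarith [show a < ‖u‖ ^ 2 from hu]
  set u₀ : ℂ := ((|a| + 1 : ℝ) : ℂ)
  have hu₀ : a < ‖u₀‖ ^ 2 := by
    rw [Complex.norm_real, Real.norm_of_nonneg (by positivity)]
    exact lt_abs_add_one_sq a
  have key := (hdg.analyticOnNhd hΩ).eqOn_of_preconnected_of_eventuallyEq (hdf.analyticOnNhd hΩ)
    (isPreconnected_setOf_lt_norm_sq (rank_real_complex ▸ Nat.one_lt_ofNat) c)
    (show c < ‖u₀‖ ^ 2 by linarith [sq_nonneg ‖z k‖])
    (hfar.eventuallyEq_of_mem ((isOpen_lt continuous_const (by fun_prop)).mem_nhds hu₀))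
  simpa using key (show c < ‖z j‖ ^ 2 by linarith [mem_Dpq.1 hz])

end Dpq

theorem holomorphic_on_Dpq_extends_general (p q : ℕ) (hp : 1 < p)
    (f : (Fin (p+q) → ℂ) → ℂ) (hf : DifferentiableOn ℂ f (Dpq p q)) :
    ∃ F : (Fin (p+q) → ℂ) → ℂ, Differentiable ℂ F ∧ Set.EqOn F f (Dpq p q) := by
  let k : Fin (p + q) := ⟨q, by omega⟩
  let j : Fin (p + q) := ⟨q + 1, by omega⟩
  have hjk : j ≠ k := by simp [j, k, Fin.ext_iff]
  have hF := differentiable_hartogsExtension (k := k) le_rfl hf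
  exact ⟨hartogsExtension q f k, hF, eqOn_Dpq_of_eq_of_norm_sq_lt hF hf (j := j) (Nat.le_succ q)
    hjk fun z hz => hartogsExtension_eq_self le_rfl hf hz⟩

/-- For `p > 1` and `q > 0`, every holomorphic function on `D^{p,q}`
extends to a holomorphic function on `ℂ^{p+q}`. -/
theorem holomorphic_on_Dpq_extends (p q : ℕ) (hp : 1 < p) (hq : 0 < q)
    (f : (Fin (p+q) → ℂ) → ℂ) (hf : DifferentiableOn ℂ f (Dpq p q)) :
    ∃ F : (Fin (p+q) → ℂ) → ℂ, Differentiable ℂ F ∧ Set.EqOn F f (Dpq p q) :=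
  holomorphic_on_Dpq_extends_general p q hp f hf

end
end

section
/- Let f : ℂ^{p+q} → ℂ^{p+q} be a holomorphic map preserving the null cone ∂D^{p,q} = {z : -Σ_{i≤q}|z_i|² + Σ_{i>q}|z_i|² = 0} with f(0) = 0 and with invertible complex Jacobian at 0. Then the complex Jacobian Jac_ℂ f(0), as a linear map, also preserves the null cone ∂D^{p,q}. -/
noncomputable section

/-- The indefinite Hermitian form `φ(z) = -Σ_{i≤q} |z_i|² + Σ_{i>q} |z_i|²`. -/
def formPQ (p q : ℕ) (z : Fin (p+q) → ℂ) : ℝ :=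
  ∑ i : Fin (p+q), (if (i : ℕ) < q then (-1 : ℝ) else 1) * ‖z i‖ ^ 2

/-- The null cone `∂D^{p,q} = {z : φ(z) = 0}`. -/
def nullCone (p q : ℕ) : Set (Fin (p+q) → ℂ) := {z | formPQ p q z = 0}

/-! The derivative at `0` is the limit of the rescalings `t⁻¹ • f (t • z)` as `t → 0`; when `f`
maps a scaling-invariant set into a closed scaling-invariant set, so does each rescaling, hence
so does the limit. -/

open Filter Set Topology

theorem HasFDerivAt.mapsTo_of_smul_invariant {𝕜 E F : Type*} [NontriviallyNormedField 𝕜]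
    [NormedAddCommGroup E] [NormedSpace 𝕜 E] [NormedAddCommGroup F] [NormedSpace 𝕜 F]
    {f : E → F} {f' : E →L[𝕜] F} {S : Set E} {T : Set F} (hf : HasFDerivAt f f' 0)
    (h0 : f 0 = 0) (hST : MapsTo f S T) (hS : ∀ c : 𝕜, c ≠ 0 → ∀ z ∈ S, c • z ∈ S)
    (hT : ∀ c : 𝕜, c ≠ 0 → ∀ w ∈ T, c • w ∈ T) (hT_closed : IsClosed T) :
    MapsTo f' S T := by
  intro z hz
  have hlim : Tendsto (fun t : 𝕜 => t⁻¹ • f (t • z)) (𝓝[≠] 0) (𝓝 (f' z)) := by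
    simpa [h0] using hf.lim z tendsto_norm_inv_nhdsNE_zero_atTop
  refine hT_closed.mem_of_tendsto hlim ?_
  filter_upwards [self_mem_nhdsWithin] with t (ht : t ≠ 0)
  exact hT _ (inv_ne_zero ht) _ (hST (hS t ht z hz))

theorem formPQ_smul (p q : ℕ) (c : ℂ) (z : Fin (p+q) → ℂ) :
    formPQ p q (c • z) = ‖c‖ ^ 2 * formPQ p q z := by
  simp only [formPQ, Finset.mul_sum]
  refine Finset.sum_congr rfl fun i _ => ?_
  simp only [Pi.smul_apply, smul_eq_mul, norm_mul, mul_pow]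
  ring

theorem smul_mem_nullCone (p q : ℕ) (c : ℂ) {z : Fin (p+q) → ℂ} (hz : z ∈ nullCone p q) :
    c • z ∈ nullCone p q := by
  show formPQ p q (c • z) = 0
  rw [formPQ_smul, hz.out, mul_zero]

theorem continuous_formPQ (p q : ℕ) : Continuous (formPQ p q) := by
  unfold formPQ
  fun_prop

theorem isClosed_nullCone (p q : ℕ) : IsClosed (nullCone p q) :=
  isClosed_eq (continuous_formPQ p q) continuous_const

theorem jacobian_preserves_null_cone_general (p q : ℕ)
    (f : (Fin (p+q) → ℂ) → (Fin (p+q) → ℂ)) (hf : Differentiable ℂ f)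
    (hcone : Set.MapsTo f (nullCone p q) (nullCone p q))
    (h0 : f 0 = 0) :
    ∀ z ∈ nullCone p q, fderiv ℂ f 0 z ∈ nullCone p q :=
  (hf 0).hasFDerivAt.mapsTo_of_smul_invariant h0 hcone
    (fun c _ _ hz => smul_mem_nullCone p q c hz) (fun c _ _ hw => smul_mem_nullCone p q c hw)
    (isClosed_nullCone p q)

/-- Let `f : ℂ^{p+q} → ℂ^{p+q}` be a holomorphic map preserving the
null cone `∂D^{p,q}`, with `f(0) = 0` and invertible complex Jacobian at `0`. Then the
complex Jacobian of `f` at `0`, as a linear map, also preserves the null cone. -/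
theorem jacobian_preserves_null_cone (p q : ℕ)
    (f : (Fin (p+q) → ℂ) → (Fin (p+q) → ℂ)) (hf : Differentiable ℂ f)
    (hcone : Set.MapsTo f (nullCone p q) (nullCone p q))
    (h0 : f 0 = 0) (hjac : Function.Bijective (fderiv ℂ f 0)) :
    ∀ z ∈ nullCone p q, fderiv ℂ f 0 z ∈ nullCone p q :=
  jacobian_preserves_null_cone_general p q f hf hcone h0

end
end
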